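/- For a graded Poisson structure W on T*M, the Jacobi identity {{m(X),m(Y)},f} + {{m(Y),f},m(X)} + {{f,m(X)},m(Y)} = 0 is equivalent to (D_{df}Ψ)(X,Y) = 0 for all vector fields X,Y and all f ∈ C^∞(M), where (D_{df}Ψ)(X,Y) := D_{df}(Ψ(X,Y)) − Ψ(D_{df}X, Y) − Ψ(X, D_{df}Y). -/

import Mathlib

open scoped BigOperators
noncomputable section

/-- The model of the base manifold `M`: global coordinates `(x^i)` on an `n`-dimensional chart. -/
abbrev Vec (n : ℕ) := Fin n → ℝ
/-- The model of the cotangent bundle `T*M`: points `(x, p)`. -/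
abbrev Cot (n : ℕ) := Vec n × Vec n
/-- Index type for the `2n` coordinates `(x^i, p_i)` of `T*M`. -/
abbrev Idx (n : ℕ) := Fin n ⊕ Fin n

/-- Smoothness. -/
def Sm {E F : Type*} [NormedAddCommGroup E] [NormedSpace ℝ E]
    [NormedAddCommGroup F] [NormedSpace ℝ F] (f : E → F) : Prop := ContDiff ℝ (⊤ : ℕ∞) f

/-- Partial derivative `∂f/∂x^i` on the base. -/
def pd {n : ℕ} (i : Fin n) (f : Vec n → ℝ) (x : Vec n) : ℝ := fderiv ℝ f x (Pi.single i 1)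

/-- Coordinate direction in `T*M`. -/
def dirOf {n : ℕ} : Idx n → Cot n
  | Sum.inl i => (Pi.single i 1, 0)
  | Sum.inr i => (0, Pi.single i 1)

/-- Partial derivative on `T*M` in the direction of the `a`-th coordinate. -/
def DT {n : ℕ} (a : Idx n) (F : Cot n → ℝ) (z : Cot n) : ℝ := fderiv ℝ F z (dirOf a)
/-- `∂/∂x^i` on `T*M`. -/
def Dxx {n : ℕ} (i : Fin n) : (Cot n → ℝ) → Cot n → ℝ := DT (Sum.inl i)
/-- `∂/∂p_i` on `T*M`. -/
def Dpp {n : ℕ} (i : Fin n) : (Cot n → ℝ) → Cot n → ℝ := DT (Sum.inr i)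

/-- A bivector field on `T*M`, given by its component matrix `W^{AB}`
(the bivector is `(1/2) W^{AB} ∂_A ∧ ∂_B`). -/
abbrev Biv (n : ℕ) := Cot n → Idx n → Idx n → ℝ

/-- The bracket of functions on `T*M` defined by a bivector field `W`. -/
def bkt {n : ℕ} (W : Biv n) (F G : Cot n → ℝ) (z : Cot n) : ℝ :=
  ∑ a : Idx n, ∑ b : Idx n, W z a b * DT a F z * DT b G z

/-- The bracket of functions on `M` defined by a bivector field `w` on `M`
(components `w^{ij}`, the bivector being `(1/2) w^{ij} ∂_i ∧ ∂_j`). -/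
def bktM {n : ℕ} (w : Vec n → Fin n → Fin n → ℝ) (f g : Vec n → ℝ) (x : Vec n) : ℝ :=
  ∑ i, ∑ j, w x i j * pd i f x * pd j g x

def SkewT {n : ℕ} (W : Biv n) : Prop := ∀ z a b, W z a b = - W z b a
def SmoothT {n : ℕ} (W : Biv n) : Prop := ∀ a b, Sm fun z => W z a b
/-- The Jacobi identity for the bracket of `W`, i.e. `[W,W] = 0`. -/
def JacobiT {n : ℕ} (W : Biv n) : Prop :=
  ∀ F G H : Cot n → ℝ, Sm F → Sm G → Sm H → ∀ z,
    bkt W (bkt W F G) H z + bkt W (bkt W G H) F z + bkt W (bkt W H F) G z = 0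

def SkewM {n : ℕ} (w : Vec n → Fin n → Fin n → ℝ) : Prop := ∀ x i j, w x i j = - w x j i
def SmoothM {n : ℕ} (w : Vec n → Fin n → Fin n → ℝ) : Prop := ∀ i j, Sm fun x => w x i j
def JacobiM {n : ℕ} (w : Vec n → Fin n → Fin n → ℝ) : Prop :=
  ∀ f g h : Vec n → ℝ, Sm f → Sm g → Sm h → ∀ x,
    bktM w (bktM w f g) h x + bktM w (bktM w g h) f x + bktM w (bktM w h f) g x = 0

/-- A Poisson structure on `T*M`. -/
def PoissonT {n : ℕ} (W : Biv n) : Prop := SkewT W ∧ SmoothT W ∧ JacobiT W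
/-- A Poisson structure on `M`. -/
def PoissonM {n : ℕ} (w : Vec n → Fin n → Fin n → ℝ) : Prop := SkewM w ∧ SmoothM w ∧ JacobiM w

/-- `F : T*M → ℝ` is a fiberwise polynomial of degree `≤ k`. -/
def PolyDeg {n : ℕ} (k : ℕ) (F : Cot n → ℝ) : Prop :=
  ∃ P : Vec n → MvPolynomial (Fin n) ℝ, (∀ x, (P x).totalDegree ≤ k) ∧
    ∀ x p, F (x, p) = MvPolynomial.eval p (P x)

/-- `F : T*M → ℝ` is a fiberwise homogeneous polynomial of degree `k`. -/
def HomogPoly {n : ℕ} (k : ℕ) (F : Cot n → ℝ) : Prop :=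
  ∃ P : Vec n → MvPolynomial (Fin n) ℝ, (∀ x, (P x).IsHomogeneous k) ∧
    ∀ x p, F (x, p) = MvPolynomial.eval p (P x)

/-- Polynomially graded bivector field: brackets of fiberwise polynomials of degree `≤ h`
and `≤ k` are fiberwise polynomials of degree `≤ h + k`. -/
def PolyGraded {n : ℕ} (W : Biv n) : Prop :=
  ∀ (h k : ℕ) (F G : Cot n → ℝ), Sm F → Sm G → PolyDeg h F → PolyDeg k G →
    PolyDeg (h + k) (bkt W F G)

/-- Graded bivector field: brackets of fiberwise homogeneous polynomials of degrees `h`, `k`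
are fiberwise homogeneous of degree `h + k`. -/
def HGraded {n : ℕ} (W : Biv n) : Prop :=
  ∀ (h k : ℕ) (F G : Cot n → ℝ), Sm F → Sm G → HomogPoly h F → HomogPoly k G →
    HomogPoly (h + k) (bkt W F G)

/-- The momentum `m(X)` of a vector field `X` on `M`. -/
def mmt {n : ℕ} (X : Vec n → Vec n) (z : Cot n) : ℝ := ∑ i, z.2 i * X z.1 i

/-- The quadratic fiberwise polynomial `s(Q)` of a symmetric 2-contravariant tensor field. -/
def sQ {n : ℕ} (G : Vec n → Fin n → Fin n → ℝ) (z : Cot n) : ℝ :=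
  ∑ i, ∑ j, G z.1 i j * z.2 i * z.2 j

/-- `W` is `π`-related to `w`: the projection `π : T*M → M` is a Poisson mapping. -/
def PiRel {n : ℕ} (W : Biv n) (w : Vec n → Fin n → Fin n → ℝ) : Prop :=
  ∀ f g : Vec n → ℝ, Sm f → Sm g → ∀ z : Cot n,
    bkt W (fun y => f y.1) (fun y => g y.1) z = bktM w f g z.1

/-- Foliated function of the vertical foliation of `T*M`: constant on the fibers. -/
def FolV {n : ℕ} (F : Cot n → ℝ) : Prop := ∀ (x p p' : Vec n), F (x, p) = F (x, p')

/-- Transversal Poisson structure of the vertical foliation of `T*M`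
(semi-Poisson structure): the bracket restricts to a Lie bracket on foliated functions. -/
def SemiPoissonT {n : ℕ} (W : Biv n) : Prop :=
  (∀ F G, Sm F → Sm G → FolV F → FolV G → FolV (bkt W F G)) ∧
  (∀ F G H, Sm F → Sm G → Sm H → FolV F → FolV G → FolV H → ∀ z,
    bkt W (bkt W F G) H z + bkt W (bkt W G H) F z + bkt W (bkt W H F) G z = 0)

/-- The `w`-Hamiltonian vector field of `f` : `(X_f^w)^j = w^{ij} ∂_i f`. -/
def ham {n : ℕ} (w : Vec n → Fin n → Fin n → ℝ) (f : Vec n → ℝ) (x : Vec n) (j : Fin n) : ℝ :=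
  ∑ i, w x i j * pd i f x

/-- Contravariant derivative of a vector field, with coefficients
`D_{dx^i} ∂_j = -Γ^{ik}_j ∂_k`, applied in the direction `df`:
`(D_{df}X)^j = ∂_i f (w^{ib} ∂_b X^j - Γ^{ij}_k X^k)`. -/
def Dvec {n : ℕ} (w : Vec n → Fin n → Fin n → ℝ) (Γ : Vec n → Fin n → Fin n → Fin n → ℝ)
    (f : Vec n → ℝ) (X : Vec n → Vec n) (x : Vec n) (j : Fin n) : ℝ :=
  ∑ i, pd i f x *
    ((∑ b, w x i b * pd b (fun y => X y j) x) - ∑ k, Γ x i j k * X x k)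

/-- The extension of the contravariant derivative `D_{df}` to symmetric 2-tensor fields. -/
def Dten2 {n : ℕ} (w : Vec n → Fin n → Fin n → ℝ) (Γ : Vec n → Fin n → Fin n → Fin n → ℝ)
    (f : Vec n → ℝ) (G : Vec n → Fin n → Fin n → ℝ) (x : Vec n) (i j : Fin n) : ℝ :=
  (∑ a, ∑ b, w x a b * pd a f x * pd b (fun y => G y i j) x)
   - (∑ a, ∑ h, pd a f x * Γ x a i h * G x h j)
   - (∑ a, ∑ h, pd a f x * Γ x a j h * G x i h)

def SmoothVF {n : ℕ} (X : Vec n → Vec n) : Prop := ∀ i, Sm fun x => X x i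
def SmoothGam {n : ℕ} (Γ : Vec n → Fin n → Fin n → Fin n → ℝ) : Prop :=
  ∀ i j k, Sm fun x => Γ x i j k

section
variable {n : ℕ}

lemma sm_pd {g : Vec n → ℝ} (hg : Sm g) (i : Fin n) : Sm (pd i g) := by
  unfold pd
  exact (hg.fderiv_right (by simp)).clm_apply contDiff_const

lemma sm_DT {F : Cot n → ℝ} (hF : Sm F) (a : Idx n) : Sm (DT a F) := by
  unfold DT
  exact (hF.fderiv_right (by simp)).clm_apply contDiff_const

lemma sm_bkt {W : Biv n} (hW : SmoothT W) {F G : Cot n → ℝ} (hF : Sm F) (hG : Sm G) :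
    Sm (bkt W F G) := by
  unfold bkt
  exact ContDiff.sum fun a _ => ContDiff.sum fun b _ =>
    ((hW a b).mul (sm_DT hF a)).mul (sm_DT hG b)

lemma sm_mmt {X : Vec n → Vec n} (hX : SmoothVF X) : Sm (mmt X) := by
  unfold mmt
  exact ContDiff.sum fun i _ =>
    (((ContinuousLinearMap.proj i).comp (ContinuousLinearMap.snd ℝ (Vec n) (Vec n))).contDiff).mul
      ((hX i).comp contDiff_fst)

lemma sm_pull {f : Vec n → ℝ} (hf : Sm f) : Sm (fun y : Cot n => f y.1) :=
  hf.comp contDiff_fst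

end
section
variable {n : ℕ}

lemma bkt_anti {W : Biv n} (hs : SkewT W) (F G : Cot n → ℝ) (z : Cot n) :
    bkt W F G z = - bkt W G F z := by
  unfold bkt
  rw [Finset.sum_comm]
  simp only [← Finset.sum_neg_distrib]
  exact Finset.sum_congr rfl fun b _ => Finset.sum_congr rfl fun a _ => by
    rw [hs z a b]; ring

lemma DT_neg (a : Idx n) (F : Cot n → ℝ) (z : Cot n) :
    DT a (fun y => -(F y)) z = - DT a F z := by
  unfold DT; rw [fderiv_fun_neg]; simp

lemma bkt_neg_left (W : Biv n) (F G : Cot n → ℝ) (z : Cot n) :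
    bkt W (fun y => -(F y)) G z = - bkt W F G z := by
  unfold bkt
  simp only [DT_neg]
  simp only [← Finset.sum_neg_distrib]
  exact Finset.sum_congr rfl fun a _ => Finset.sum_congr rfl fun b _ => by ring

lemma DT_mul (a : Idx n) {F G : Cot n → ℝ} {z : Cot n}
    (hF : DifferentiableAt ℝ F z) (hG : DifferentiableAt ℝ G z) :
    DT a (fun y => F y * G y) z = F z * DT a G z + G z * DT a F z := by
  unfold DT
  rw [fderiv_fun_mul hF hG]
  simp [mul_comm]

lemma bkt_mul_left (W : Biv n) {F G : Cot n → ℝ} (H : Cot n → ℝ) {z : Cot n}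
    (hF : DifferentiableAt ℝ F z) (hG : DifferentiableAt ℝ G z) :
    bkt W (fun y => F y * G y) H z = F z * bkt W G H z + G z * bkt W F H z := by
  unfold bkt
  simp only [DT_mul _ hF hG, Finset.mul_sum]
  rw [← Finset.sum_add_distrib]
  refine Finset.sum_congr rfl fun a _ => ?_
  rw [← Finset.sum_add_distrib]
  refine Finset.sum_congr rfl fun b _ => by ring

lemma DT_sum {ι : Type*} (s : Finset ι) (a : Idx n) (F : ι → Cot n → ℝ) (z : Cot n)
    (hF : ∀ i ∈ s, DifferentiableAt ℝ (F i) z) :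
    DT a (fun y => ∑ i ∈ s, F i y) z = ∑ i ∈ s, DT a (F i) z := by
  unfold DT
  rw [fderiv_fun_sum hF]
  simp

lemma bkt_sum_left {ι : Type*} (s : Finset ι) (W : Biv n) (F : ι → Cot n → ℝ)
    (H : Cot n → ℝ) (z : Cot n) (hF : ∀ i ∈ s, DifferentiableAt ℝ (F i) z) :
    bkt W (fun y => ∑ i ∈ s, F i y) H z = ∑ i ∈ s, bkt W (F i) H z := by
  unfold bkt
  simp only [DT_sum s _ F z hF]
  have h1 : ∀ a : Idx n, (∑ b : Idx n, W z a b * (∑ i ∈ s, DT a (F i) z) * DT b H z)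
      = ∑ i ∈ s, ∑ b : Idx n, W z a b * DT a (F i) z * DT b H z := by
    intro a
    rw [Finset.sum_comm]
    refine Finset.sum_congr rfl fun b _ => ?_
    rw [Finset.mul_sum, Finset.sum_mul]
  simp only [h1]
  exact Finset.sum_comm
section
variable {n : ℕ}

lemma sQ_polar {G : Vec n → Fin n → Fin n → ℝ} (hs : ∀ x i j, G x i j = G x j i)
    (x : Vec n) (i j : Fin n) :
    G x i j = (sQ G (x, Pi.single i 1 + Pi.single j 1)
      - sQ G (x, Pi.single i 1) - sQ G (x, Pi.single j 1)) / 2 := by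
  unfold sQ
  simp only [Pi.add_apply, Pi.single_apply, mul_ite, ite_mul, mul_one, mul_zero, zero_mul,
    one_mul, mul_add, add_mul, Finset.sum_add_distrib, Finset.sum_ite_eq, Finset.sum_ite_eq', Finset.mem_univ,
    if_true]
  rw [hs x j i]
  ring

lemma sQ_sub (G H K : Vec n → Fin n → Fin n → ℝ) (z : Cot n) :
    sQ (fun x i j => G x i j - H x i j - K x i j) z = sQ G z - sQ H z - sQ K z := by
  unfold sQ
  simp only [← Finset.sum_sub_distrib]
  exact Finset.sum_congr rfl fun i _ => Finset.sum_congr rfl fun j _ => by ring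

end
section
variable {n : ℕ}

lemma pd_const (b : Fin n) (c : ℝ) (x : Vec n) : pd b (fun _ : Vec n => c) x = 0 := by
  simp [pd]

lemma sm_Dvec {w : Vec n → Fin n → Fin n → ℝ} {Γ : Vec n → Fin n → Fin n → Fin n → ℝ}
    {f : Vec n → ℝ} {X : Vec n → Vec n} (hw : SmoothM w) (hΓ : SmoothGam Γ)
    (hf : Sm f) (hX : SmoothVF X) : SmoothVF (fun x j => Dvec w Γ f X x j) := by
  intro j
  unfold Dvec
  exact ContDiff.sum fun i _ => (sm_pd hf i).mul
    ((ContDiff.sum fun b _ => (hw i b).mul (sm_pd (hX j) b)).sub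
      (ContDiff.sum fun k _ => (hΓ i j k).mul (hX k)))

lemma sm_of_sQ {G : Vec n → Fin n → Fin n → ℝ} (hs : ∀ x i j, G x i j = G x j i)
    {B : Cot n → ℝ} (hB : Sm B) (hBG : ∀ z, B z = sQ G z) (i j : Fin n) :
    Sm (fun x => G x i j) := by
  have e : (fun x => G x i j) = fun x =>
      (B (x, Pi.single i 1 + Pi.single j 1) - B (x, Pi.single i 1) - B (x, Pi.single j 1)) / 2 := by
    funext x
    rw [hBG, hBG, hBG]
    exact sQ_polar hs x i j
  rw [e]
  exact (((hB.comp (contDiff_id.prodMk contDiff_const)).sub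
    (hB.comp (contDiff_id.prodMk contDiff_const))).sub
    (hB.comp (contDiff_id.prodMk contDiff_const))).div_const _

lemma zero_of_sQ {G : Vec n → Fin n → Fin n → ℝ} (hs : ∀ x i j, G x i j = G x j i)
    (h0 : ∀ z, sQ G z = 0) (x : Vec n) (i j : Fin n) : G x i j = 0 := by
  rw [sQ_polar hs x i j, h0, h0, h0]
  norm_num

lemma Dten2_symm {w : Vec n → Fin n → Fin n → ℝ} {Γ : Vec n → Fin n → Fin n → Fin n → ℝ}
    {f : Vec n → ℝ} {G : Vec n → Fin n → Fin n → ℝ} (hGs : ∀ x i j, G x i j = G x j i)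
    (x : Vec n) (i j : Fin n) : Dten2 w Γ f G x i j = Dten2 w Γ f G x j i := by
  unfold Dten2
  have h1 : (fun y => G y i j) = fun y => G y j i := funext fun y => hGs y i j
  rw [h1]
  have h2 : (∑ a, ∑ h, pd a f x * Γ x a i h * G x h j)
      = ∑ a, ∑ h, pd a f x * Γ x a i h * G x j h :=
    Finset.sum_congr rfl fun a _ => Finset.sum_congr rfl fun h _ => by rw [hGs x h j]
  have h3 : (∑ a, ∑ h, pd a f x * Γ x a j h * G x i h)
      = ∑ a, ∑ h, pd a f x * Γ x a j h * G x h i :=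
    Finset.sum_congr rfl fun a _ => Finset.sum_congr rfl fun h _ => by rw [hGs x i h]
  rw [h2, h3]
  ring

end
section
variable {n : ℕ}

lemma key (W : Biv n) (w : Vec n → Fin n → Fin n → ℝ) (Γ : Vec n → Fin n → Fin n → Fin n → ℝ)
    (f : Vec n → ℝ) (hf : Sm f)
    (hD : ∀ (X : Vec n → Vec n), SmoothVF X →
      ∀ z : Cot n, bkt W (mmt X) (fun y => f y.1) z = -(mmt (fun x j => Dvec w Γ f X x j) z))
    (G : Vec n → Fin n → Fin n → ℝ) (hG : ∀ i j, Sm fun x => G x i j) (z : Cot n) :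
    bkt W (sQ G) (fun y => f y.1) z = - sQ (Dten2 w Γ f G) z := by
  have hGi : ∀ i : Fin n, SmoothVF (fun x => G x i) := fun i j => hG i j
  have hEi : ∀ i : Fin n, SmoothVF (fun _ : Vec n => (Pi.single i 1 : Vec n)) :=
    fun i j => contDiff_const
  -- decompose sQ G into a sum of products of momenta
  have hrw : sQ G = fun y : Cot n =>
      ∑ i, mmt (fun _ => Pi.single i 1) y * mmt (fun x => G x i) y := by
    funext y
    unfold sQ mmt
    simp only [Pi.single_apply, mul_ite, mul_one, mul_zero, Finset.sum_ite_eq',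
      Finset.mem_univ, if_true]
    refine Finset.sum_congr rfl fun i _ => ?_
    rw [Finset.mul_sum]
    exact Finset.sum_congr rfl fun j _ => by ring
  rw [hrw]
  rw [bkt_sum_left Finset.univ W _ _ z (fun i _ =>
    (((sm_mmt (hEi i)).mul (sm_mmt (hGi i))).differentiable (by simp)).differentiableAt)]
  have step : ∀ i : Fin n,
      bkt W (fun y => mmt (fun _ => Pi.single i 1) y * mmt (fun x => G x i) y)
        (fun y => f y.1) z
      = mmt (fun _ => Pi.single i 1) z *
          (-(mmt (fun x j => Dvec w Γ f (fun x => G x i) x j) z))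
        + mmt (fun x => G x i) z *
          (-(mmt (fun x j => Dvec w Γ f (fun _ => Pi.single i 1) x j) z)) := by
    intro i
    rw [bkt_mul_left W _ ((sm_mmt (hEi i)).differentiable (by simp)).differentiableAt
      ((sm_mmt (hGi i)).differentiable (by simp)).differentiableAt,
      hD _ (hGi i) z, hD _ (hEi i) z]
  simp only [step]
  have hmE : ∀ i : Fin n, mmt (fun _ : Vec n => (Pi.single i 1 : Vec n)) z = z.2 i := by
    intro i
    unfold mmt
    simp [Pi.single_apply, mul_ite, mul_one, mul_zero, Finset.sum_ite_eq', Finset.mem_univ]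
  have hDE : ∀ i : Fin n, mmt (fun x j => Dvec w Γ f (fun _ => Pi.single i 1) x j) z
      = -(∑ j, z.2 j * (∑ a, pd a f z.1 * Γ z.1 a j i)) := by
    intro i
    unfold mmt Dvec
    simp only [pd_const, mul_zero, Finset.sum_const_zero, Pi.single_apply, mul_ite,
      mul_one, Finset.sum_ite_eq', Finset.mem_univ, if_true, zero_sub, mul_neg,
      Finset.sum_neg_distrib]
  simp only [hmE, hDE, neg_neg]
  rw [Finset.sum_add_distrib]
  have hDG : ∀ i : Fin n, mmt (fun x j => Dvec w Γ f (fun x => G x i) x j) z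
      = ∑ j, z.2 j * (∑ a, pd a f z.1 *
          ((∑ b, w z.1 a b * pd b (fun y => G y i j) z.1) - ∑ k, Γ z.1 a j k * G z.1 i k)) :=
    fun i => rfl
  have hmG : ∀ i : Fin n, mmt (fun x => G x i) z = ∑ h, z.2 h * G z.1 i h := fun i => rfl
  have hA : (∑ i, z.2 i * mmt (fun x j => Dvec w Γ f (fun x => G x i) x j) z)
      = (∑ i, ∑ j, (∑ a, pd a f z.1 * (∑ b, w z.1 a b * pd b (fun y => G y i j) z.1))
            * z.2 i * z.2 j)
        - ∑ i, ∑ j, (∑ a, pd a f z.1 * (∑ k, Γ z.1 a j k * G z.1 i k)) * z.2 i * z.2 j := by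
    simp only [hDG]
    rw [← Finset.sum_sub_distrib]
    refine Finset.sum_congr rfl fun i _ => ?_
    rw [Finset.mul_sum, ← Finset.sum_sub_distrib]
    refine Finset.sum_congr rfl fun j _ => ?_
    rw [show (∑ a, pd a f z.1 * ((∑ b, w z.1 a b * pd b (fun y => G y i j) z.1)
          - ∑ k, Γ z.1 a j k * G z.1 i k))
        = (∑ a, pd a f z.1 * (∑ b, w z.1 a b * pd b (fun y => G y i j) z.1))
          - ∑ a, pd a f z.1 * (∑ k, Γ z.1 a j k * G z.1 i k) from by
      rw [← Finset.sum_sub_distrib]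
      exact Finset.sum_congr rfl fun a _ => by ring]
    ring
  have hB : (∑ i, mmt (fun x => G x i) z * (∑ j, z.2 j * (∑ a, pd a f z.1 * Γ z.1 a j i)))
      = ∑ i, ∑ j, (∑ h, (∑ a, pd a f z.1 * Γ z.1 a i h) * G z.1 h j) * z.2 i * z.2 j := by
    simp only [hmG]
    have l1 : ∀ i : Fin n,
        (∑ h, z.2 h * G z.1 i h) * (∑ j, z.2 j * (∑ a, pd a f z.1 * Γ z.1 a j i))
        = ∑ j, ∑ h, z.2 h * G z.1 i h * (z.2 j * (∑ a, pd a f z.1 * Γ z.1 a j i)) := by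
      intro i
      rw [Finset.mul_sum]
      exact Finset.sum_congr rfl fun j _ => by rw [Finset.sum_mul]
    have r1 : ∀ i j : Fin n,
        (∑ h, (∑ a, pd a f z.1 * Γ z.1 a i h) * G z.1 h j) * z.2 i * z.2 j
        = ∑ h, (∑ a, pd a f z.1 * Γ z.1 a i h) * G z.1 h j * z.2 i * z.2 j := by
      intro i j
      rw [Finset.sum_mul, Finset.sum_mul]
    simp only [l1, r1]
    rw [Finset.sum_comm]
    refine Finset.sum_congr rfl fun j _ => ?_
    rw [Finset.sum_comm]
    exact Finset.sum_congr rfl fun h _ => Finset.sum_congr rfl fun i _ => by ring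
  have hRHS : sQ (Dten2 w Γ f G) z
      = (∑ i, ∑ j, (∑ a, pd a f z.1 * (∑ b, w z.1 a b * pd b (fun y => G y i j) z.1))
            * z.2 i * z.2 j)
        - (∑ i, ∑ j, (∑ h, (∑ a, pd a f z.1 * Γ z.1 a i h) * G z.1 h j) * z.2 i * z.2 j)
        - ∑ i, ∑ j, (∑ a, pd a f z.1 * (∑ k, Γ z.1 a j k * G z.1 i k)) * z.2 i * z.2 j := by
    unfold sQ Dten2
    rw [← Finset.sum_sub_distrib, ← Finset.sum_sub_distrib]
    refine Finset.sum_congr rfl fun i _ => ?_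
    rw [← Finset.sum_sub_distrib, ← Finset.sum_sub_distrib]
    refine Finset.sum_congr rfl fun j _ => ?_
    have e1 : (∑ a, ∑ b, w z.1 a b * pd a f z.1 * pd b (fun y => G y i j) z.1)
        = ∑ a, pd a f z.1 * (∑ b, w z.1 a b * pd b (fun y => G y i j) z.1) := by
      refine Finset.sum_congr rfl fun a _ => ?_
      rw [Finset.mul_sum]
      exact Finset.sum_congr rfl fun b _ => by ring
    have e2 : (∑ a, ∑ h, pd a f z.1 * Γ z.1 a i h * G z.1 h j)
        = ∑ h, (∑ a, pd a f z.1 * Γ z.1 a i h) * G z.1 h j := by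
      rw [Finset.sum_comm]
      exact Finset.sum_congr rfl fun h _ => by rw [Finset.sum_mul]
    have e3 : (∑ a, ∑ h, pd a f z.1 * Γ z.1 a j h * G z.1 i h)
        = ∑ a, pd a f z.1 * (∑ k, Γ z.1 a j k * G z.1 i k) := by
      refine Finset.sum_congr rfl fun a _ => ?_
      rw [Finset.mul_sum]
      exact Finset.sum_congr rfl fun k _ => by ring
    rw [e1, e2, e3]
    ring
  rw [show (∑ i, z.2 i * -(mmt (fun x j => Dvec w Γ f (fun x => G x i) x j) z))
      = -(∑ i, z.2 i * mmt (fun x j => Dvec w Γ f (fun x => G x i) x j) z) by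
    simp only [mul_neg, Finset.sum_neg_distrib]]
  rw [hA, hB, hRHS]
  ring

end
/-- for a graded Poisson structure `W` on `T*M`, the Jacobi identity
`{{m(X),m(Y)},f} + {{m(Y),f},m(X)} + {{f,m(X)},m(Y)} = 0` is equivalent to
`(D_{df}Ψ)(X,Y) := D_{df}(Ψ(X,Y)) - Ψ(D_{df}X, Y) - Ψ(X, D_{df}Y) = 0`. -/
theorem stmt5 {n : ℕ} (W : Biv n) (w : Vec n → Fin n → Fin n → ℝ)
    (Γ : Vec n → Fin n → Fin n → Fin n → ℝ)
    (hW : PoissonT W) (hgr : HGraded W) (hw : PoissonM w) (hrel : PiRel W w)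
    (hΓ : SmoothGam Γ)
    (hD : ∀ (X : Vec n → Vec n) (f : Vec n → ℝ), SmoothVF X → Sm f →
      ∀ z : Cot n, bkt W (mmt X) (fun y => f y.1) z = -(mmt (fun x j => Dvec w Γ f X x j) z))
    (Psi : (Vec n → Vec n) → (Vec n → Vec n) → Vec n → Fin n → Fin n → ℝ)
    (hPsiSym : ∀ X Y x i j, Psi X Y x i j = Psi X Y x j i)
    (hPsi : ∀ (X Y : Vec n → Vec n), SmoothVF X → SmoothVF Y →
      ∀ z : Cot n, bkt W (mmt X) (mmt Y) z = sQ (Psi X Y) z)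
    (X Y : Vec n → Vec n) (f : Vec n → ℝ) (hX : SmoothVF X) (hY : SmoothVF Y) (hf : Sm f) :
    (∀ z : Cot n,
        bkt W (bkt W (mmt X) (mmt Y)) (fun y => f y.1) z
        + bkt W (bkt W (mmt Y) (fun y => f y.1)) (mmt X) z
        + bkt W (bkt W (fun y => f y.1) (mmt X)) (mmt Y) z = 0)
    ↔
    (∀ x i j, Dten2 w Γ f (Psi X Y) x i j
        - Psi (fun y l => Dvec w Γ f X y l) Y x i j
        - Psi X (fun y l => Dvec w Γ f Y y l) x i j = 0) := by
  obtain ⟨hskew, hsmW, _⟩ := hW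
  have hB : Sm (bkt W (mmt X) (mmt Y)) := sm_bkt hsmW (sm_mmt hX) (sm_mmt hY)
  have hPsiXY : ∀ i j, Sm fun x => Psi X Y x i j :=
    fun i j => sm_of_sQ (hPsiSym X Y) hB (hPsi X Y hX hY) i j
  have hDX : SmoothVF (fun x j => Dvec w Γ f X x j) := sm_Dvec hw.2.1 hΓ hf hX
  have hDY : SmoothVF (fun x j => Dvec w Γ f Y x j) := sm_Dvec hw.2.1 hΓ hf hY
  set K : Vec n → Fin n → Fin n → ℝ := fun x i j =>
    Dten2 w Γ f (Psi X Y) x i j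
      - Psi (fun y l => Dvec w Γ f X y l) Y x i j
      - Psi X (fun y l => Dvec w Γ f Y y l) x i j with hK
  have hKsym : ∀ x i j, K x i j = K x j i := by
    intro x i j
    rw [hK]
    dsimp only
    rw [Dten2_symm (hPsiSym X Y) x i j, hPsiSym _ Y x i j, hPsiSym X _ x i j]
  have main : ∀ z : Cot n,
      bkt W (bkt W (mmt X) (mmt Y)) (fun y => f y.1) z
        + bkt W (bkt W (mmt Y) (fun y => f y.1)) (mmt X) z
        + bkt W (bkt W (fun y => f y.1) (mmt X)) (mmt Y) z
      = - sQ K z := by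
    intro z
    have t1 : bkt W (bkt W (mmt X) (mmt Y)) (fun y => f y.1) z
        = - sQ (Dten2 w Γ f (Psi X Y)) z := by
      have e : bkt W (mmt X) (mmt Y) = sQ (Psi X Y) := funext (hPsi X Y hX hY)
      rw [e]
      exact key W w Γ f hf (fun X' hX' z' => hD X' f hX' hf z') (Psi X Y) hPsiXY z
    have t2 : bkt W (bkt W (mmt Y) (fun y => f y.1)) (mmt X) z
        = sQ (Psi X (fun y l => Dvec w Γ f Y y l)) z := by
      have e : bkt W (mmt Y) (fun y => f y.1)
          = fun z' => -(mmt (fun x j => Dvec w Γ f Y x j) z') :=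
        funext fun z' => hD Y f hY hf z'
      rw [e, bkt_neg_left,
        bkt_anti hskew (mmt (fun x j => Dvec w Γ f Y x j)) (mmt X) z, neg_neg]
      exact hPsi X _ hX hDY z
    have t3 : bkt W (bkt W (fun y => f y.1) (mmt X)) (mmt Y) z
        = sQ (Psi (fun y l => Dvec w Γ f X y l) Y) z := by
      have e : bkt W (fun y => f y.1) (mmt X)
          = fun z' => mmt (fun x j => Dvec w Γ f X x j) z' := by
        funext z'
        rw [bkt_anti hskew (fun y => f y.1) (mmt X) z', hD X f hX hf z', neg_neg]
      rw [e]
      exact hPsi _ Y hDX hY z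
    rw [t1, t2, t3, hK, sQ_sub]
    ring
  constructor
  · intro hjac x i j
    have hz : ∀ z, sQ K z = 0 := by
      intro z
      have h1 := main z
      rw [hjac z] at h1
      linarith
    exact zero_of_sQ hKsym hz x i j
  · intro h0 z
    rw [main z]
    have : sQ K z = 0 := by
      unfold sQ
      refine Finset.sum_eq_zero fun i _ => Finset.sum_eq_zero fun j _ => ?_
      rw [hK]
      dsimp only
      rw [h0 z.1 i j]
      ring
    rw [this, neg_zero]
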